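/- There exists a bijection φ of the vertex set Fin 7 × Fin 3 onto itself such that for every vertex v, there is a graph isomorphism between the subgraph of G₁ induced on the 2-ball around v in G₁ and the subgraph of G₂ induced on the 2-ball around φ(v) in G₂ which maps v to φ(v). Thus corresponding vertices of G₁ and G₂ have identical (isomorphic) 2-hop neighborhoods, even though the minimum vertex cover sizes of G₁ and G₂ differ (9 versus 10). -/

import Mathlib

/-- The `k`-ball around a vertex `v`: vertices reachable from `v` at graph distance at
most `k`. -/
def ball {V : Type*} (G : SimpleGraph V) (v : V) (k : ℕ) : Set V :=
  {u | G.Reachable v u ∧ G.dist v u ≤ k}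

lemma self_mem_ball {V : Type*} (G : SimpleGraph V) (v : V) (k : ℕ) : v ∈ ball G v k :=
  ⟨SimpleGraph.Reachable.refl v, by simp [SimpleGraph.dist_self]⟩

/-- The edges of `G₁`: the balanced binary tree on 7 nodes with each node replaced by a
chain of 3 vertices. -/
def edgesG1 : List ((Fin 7 × Fin 3) × (Fin 7 × Fin 3)) :=
  [((0, 0), (0, 1)), ((0, 1), (0, 2)),
   ((1, 0), (1, 1)), ((1, 1), (1, 2)),
   ((2, 0), (2, 1)), ((2, 1), (2, 2)),
   ((3, 0), (3, 1)), ((3, 1), (3, 2)),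
   ((4, 0), (4, 1)), ((4, 1), (4, 2)),
   ((5, 0), (5, 1)), ((5, 1), (5, 2)),
   ((6, 0), (6, 1)), ((6, 1), (6, 2)),
   ((0, 2), (1, 0)), ((0, 2), (2, 0)),
   ((1, 2), (3, 0)), ((1, 2), (4, 0)),
   ((2, 2), (5, 0)), ((2, 2), (6, 0))]

/-- The graph `G₁`. -/
def G1 : SimpleGraph (Fin 7 × Fin 3) where
  Adj a b := (a, b) ∈ edgesG1 ∨ (b, a) ∈ edgesG1
  symm := ⟨fun _ _ h => h.symm⟩
  loopless := ⟨by intro a; fin_cases a <;> simp [edgesG1]⟩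

/-- The edges of `G₂`: the completely imbalanced binary tree of depth 3 on 7 nodes with
each node replaced by a chain of 3 vertices. -/
def edgesG2 : List ((Fin 7 × Fin 3) × (Fin 7 × Fin 3)) :=
  [((0, 0), (0, 1)), ((0, 1), (0, 2)),
   ((1, 0), (1, 1)), ((1, 1), (1, 2)),
   ((2, 0), (2, 1)), ((2, 1), (2, 2)),
   ((3, 0), (3, 1)), ((3, 1), (3, 2)),
   ((4, 0), (4, 1)), ((4, 1), (4, 2)),
   ((5, 0), (5, 1)), ((5, 1), (5, 2)),
   ((6, 0), (6, 1)), ((6, 1), (6, 2)),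
   ((0, 2), (1, 0)), ((0, 2), (2, 0)),
   ((1, 2), (3, 0)), ((1, 2), (4, 0)),
   ((3, 2), (5, 0)), ((3, 2), (6, 0))]

/-- The graph `G₂`. -/
def G2 : SimpleGraph (Fin 7 × Fin 3) where
  Adj a b := (a, b) ∈ edgesG2 ∨ (b, a) ∈ edgesG2
  symm := ⟨fun _ _ h => h.symm⟩
  loopless := ⟨by intro a; fin_cases a <;> simp [edgesG2]⟩

/-- A set `S` of vertices is a vertex cover of `G` if every edge of `G` has at least one
endpoint in `S`. -/
def IsVertexCover {V : Type*} (G : SimpleGraph V) (S : Finset V) : Prop :=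
  ∀ ⦃v w : V⦄, G.Adj v w → v ∈ S ∨ w ∈ S

/-!
Both graphs are chains of three vertices hung on the binary trees `T₁` and `T₂`. The 2-ball of a
vertex on the chain of a tree node `i` meets only the chains of `i`, of its parent, of its
siblings and of its children, and each such configuration in `T₁` also occurs in `T₂`, so `φ`
moves the chain of `i` to the chain of a node of `T₂` with the same configuration. As the graphs
are bipartite, no two vertices at distance exactly 2 from the centre are adjacent, so a
relabelling that preserves adjacency at the closed neighbourhood of the centre already restricts
to an isomorphism of 2-balls.

A vertex cover contains a separate endpoint of every edge of a matching, so matchings of sizes 9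
in `G₁` and 10 in `G₂` bound the cover numbers from below, and explicit covers of these sizes
(as König's theorem promises for trees) show the bounds are attained.
-/

open Equiv

section Ball

variable {V W : Type*} {G : SimpleGraph V} {H : SimpleGraph W}

theorem mem_ball_two_iff {v u : V} :
    u ∈ ball G v 2 ↔ u = v ∨ G.Adj v u ∨ ∃ w, G.Adj v w ∧ G.Adj w u := by
  constructor
  · rintro ⟨hreach, hdist⟩
    obtain ⟨p, hp⟩ := hreach.exists_walk_length_eq_dist
    rw [← hp] at hdist
    match p, hdist with
    | .nil, _ => exact .inl rfl
    | .cons h .nil, _ => exact .inr (.inl h)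
    | .cons h (.cons h' .nil), _ => exact .inr (.inr ⟨_, h, h'⟩)
    | .cons _ (.cons _ (.cons _ _)), h => simp at h
  · rintro (rfl | h | ⟨w, hvw, hwu⟩)
    · exact self_mem_ball G u 2
    · exact ⟨h.reachable, (SimpleGraph.dist_le h.toWalk).trans (by simp)⟩
    · let p : G.Walk v u := .cons hvw hwu.toWalk
      exact ⟨p.reachable, (SimpleGraph.dist_le p).trans (by simp [p])⟩

theorem exists_adj_adj_of_mem_ball_two {v u : V} (hu : u ∈ ball G v 2)
    (hfar : ¬(u = v ∨ G.Adj v u)) : ∃ w, G.Adj v w ∧ G.Adj w u := by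
  rw [mem_ball_two_iff] at hu
  tauto

theorem SimpleGraph.Coloring.eq_of_adj_of_adj (C : G.Coloring (Fin 2)) {a b c : V}
    (hab : G.Adj a b) (hbc : G.Adj b c) : C a = C c := by
  have h₁ := C.valid hab
  have h₂ := C.valid hbc
  omega

theorem not_adj_of_mem_ball_two (hG : G.IsBipartite) {v a b : V}
    (ha : a ∈ ball G v 2) (ha' : ¬(a = v ∨ G.Adj v a))
    (hb : b ∈ ball G v 2) (hb' : ¬(b = v ∨ G.Adj v b)) : ¬G.Adj a b := by
  obtain ⟨C⟩ := hG
  obtain ⟨x, hvx, hxa⟩ := exists_adj_adj_of_mem_ball_two ha ha'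
  obtain ⟨y, hvy, hyb⟩ := exists_adj_adj_of_mem_ball_two hb hb'
  have hab : C a = C b :=
    (C.eq_of_adj_of_adj hvx hxa).symm.trans (C.eq_of_adj_of_adj hvy hyb)
  exact fun h => C.valid h hab

theorem exists_iso_induce_ball_two (hG : G.IsBipartite) (hH : H.IsBipartite) (π : V ≃ W)
    {v : V} {w : W} (hv : π v = w)
    (hπ : ∀ a, (a = v ∨ G.Adj v a) → ∀ b, G.Adj a b ↔ H.Adj (π a) (π b)) :
    ∃ e : G.induce (ball G v 2) ≃g H.induce (ball H w 2),
      e ⟨v, self_mem_ball G v 2⟩ = ⟨w, self_mem_ball H w 2⟩ := by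
  subst hv
  have hnear (a : V) : (a = v ∨ G.Adj v a) ↔ (π a = π v ∨ H.Adj (π v) (π a)) :=
    or_congr π.apply_eq_iff_eq.symm (hπ v (.inl rfl) a)
  have hmem (u : V) : u ∈ ball G v 2 ↔ π u ∈ ball H (π v) 2 := by
    simp only [mem_ball_two_iff]
    refine or_congr π.apply_eq_iff_eq.symm (or_congr (hπ v (.inl rfl) u) ⟨?_, ?_⟩)
    · rintro ⟨x, hvx, hxu⟩
      exact ⟨π x, (hπ v (.inl rfl) x).1 hvx, (hπ x (.inr hvx) u).1 hxu⟩
    · rintro ⟨x', hvx, hxu⟩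
      obtain ⟨x, rfl⟩ := π.surjective x'
      have hvx := (hπ v (.inl rfl) x).2 hvx
      exact ⟨x, hvx, (hπ x (.inr hvx) u).2 hxu⟩
  have hadj (a : V) (ha : a ∈ ball G v 2) (b : V) (hb : b ∈ ball G v 2) :
      G.Adj a b ↔ H.Adj (π a) (π b) := by
    by_cases ha' : a = v ∨ G.Adj v a
    · exact hπ a ha' b
    by_cases hb' : b = v ∨ G.Adj v b
    · rw [G.adj_comm, H.adj_comm]
      exact hπ b hb' a
    exact iff_of_false (not_adj_of_mem_ball_two hG ha ha' hb hb')
      (not_adj_of_mem_ball_two hH ((hmem a).1 ha) ((hnear a).not.1 ha') ((hmem b).1 hb)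
        ((hnear b).not.1 hb'))
  exact ⟨⟨π.subtypeEquiv hmem, fun {a b} => (hadj a a.2 b b.2).symm⟩, rfl⟩

end Ball

theorem IsVertexCover.length_le_card {V : Type*} [DecidableEq V] {G : SimpleGraph V}
    {S : Finset V} (hS : IsVertexCover G S) (M : List (V × V)) (hM : ∀ p ∈ M, G.Adj p.1 p.2)
    (hdisj : (M.flatMap fun p => [p.1, p.2]).Nodup) : M.length ≤ S.card := by
  let f : V × V → V := fun p => if p.1 ∈ S then p.1 else p.2
  have hf_mem (p : V × V) : f p ∈ [p.1, p.2] := by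
    by_cases h : p.1 ∈ S <;> simp [f, h]
  have hf_cover (p : V × V) (hp : p ∈ M) : f p ∈ S := by
    by_cases h : p.1 ∈ S
    · simp [f, h]
    · simpa [f, h] using (hS (hM p hp)).resolve_left h
  have hf_nodup : (M.map f).Nodup := by
    rw [List.nodup_flatMap] at hdisj
    rw [List.Nodup, List.pairwise_map]
    refine hdisj.2.imp fun {p q} hpq hfpq => hpq (hf_mem p) ?_
    rw [hfpq]
    exact hf_mem q
  calc M.length = (M.map f).toFinset.card := by
        rw [List.toFinset_card_of_nodup hf_nodup, List.length_map]
    _ ≤ S.card := Finset.card_le_card fun x hx => by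
        obtain ⟨p, hp, rfl⟩ := List.mem_map.1 (List.mem_toFinset.1 hx)
        exact hf_cover p hp

instance : DecidableRel G1.Adj :=
  fun a b => inferInstanceAs (Decidable ((a, b) ∈ edgesG1 ∨ (b, a) ∈ edgesG1))

instance : DecidableRel G2.Adj :=
  fun a b => inferInstanceAs (Decidable ((a, b) ∈ edgesG2 ∨ (b, a) ∈ edgesG2))

-- Colour each vertex by the parity of its distance `3 · depth + position` from `(0, 0)`.
theorem G1_isBipartite : G1.IsBipartite :=
  ⟨.mk (fun x => Fin.ofNat 2 (x.2 + 3 * ![0, 1, 1, 2, 2, 2, 2] x.1)) (by decide)⟩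

theorem G2_isBipartite : G2.IsBipartite :=
  ⟨.mk (fun x => Fin.ofNat 2 (x.2 + 3 * ![0, 1, 1, 2, 2, 3, 3] x.1)) (by decide)⟩

def nodeMap : Perm (Fin 7) := c[2, 3, 4]

def vertexMap : Perm (Fin 7 × Fin 3) := nodeMap.prodCongr (Equiv.refl _)

/-- `localNodeMap i` takes node `i` and its parent, siblings and children in `T₁` to node
`nodeMap i` and its parent, siblings and children in `T₂`. -/
def localNodeMap : Fin 7 → Perm (Fin 7) :=
  ![1, 1, c[0, 1, 4, 2, 3], swap 3 4, c[0, 3, 1] * swap 2 4, swap 2 3, swap 2 3]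

def localMap (v : Fin 7 × Fin 3) : Perm (Fin 7 × Fin 3) :=
  (localNodeMap v.1).prodCongr (Equiv.refl _)

theorem localMap_self : ∀ v, localMap v v = vertexMap v := by
  decide

theorem G1_adj_iff_G2_adj_localMap : ∀ v a, (a = v ∨ G1.Adj v a) →
    ∀ b, G1.Adj a b ↔ G2.Adj (localMap v a) (localMap v b) := by
  decide

theorem G1_ball_two_iso_G2 (v : Fin 7 × Fin 3) :
    ∃ e : G1.induce (ball G1 v 2) ≃g G2.induce (ball G2 (vertexMap v) 2),
      e ⟨v, self_mem_ball G1 v 2⟩ = ⟨vertexMap v, self_mem_ball G2 (vertexMap v) 2⟩ :=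
  exists_iso_induce_ball_two G1_isBipartite G2_isBipartite (localMap v) (localMap_self v)
    (G1_adj_iff_G2_adj_localMap v)

theorem isVertexCover_G1 :
    IsVertexCover G1 {(0, 1), (1, 0), (1, 2), (2, 0), (2, 2), (3, 1), (4, 1), (5, 1), (6, 1)} := by
  unfold IsVertexCover
  decide

theorem isVertexCover_G2 : IsVertexCover G2
    {(0, 1), (1, 0), (1, 2), (2, 0), (2, 1), (3, 0), (3, 2), (4, 1), (5, 1), (6, 1)} := by
  unfold IsVertexCover
  decide

set_option maxRecDepth 2000 in
theorem nine_le_card_of_isVertexCover_G1 {S : Finset (Fin 7 × Fin 3)}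
    (hS : IsVertexCover G1 S) : 9 ≤ S.card :=
  hS.length_le_card
    [((0, 0), (0, 1)), ((0, 2), (1, 0)), ((1, 1), (1, 2)), ((2, 0), (2, 1)), ((2, 2), (5, 0)),
      ((3, 0), (3, 1)), ((4, 0), (4, 1)), ((5, 1), (5, 2)), ((6, 0), (6, 1))]
    (by decide) (by decide)

set_option maxRecDepth 2000 in
theorem ten_le_card_of_isVertexCover_G2 {S : Finset (Fin 7 × Fin 3)}
    (hS : IsVertexCover G2 S) : 10 ≤ S.card :=
  hS.length_le_card
    [((0, 0), (0, 1)), ((0, 2), (2, 0)), ((2, 1), (2, 2)), ((1, 0), (1, 1)), ((1, 2), (4, 0)),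
      ((4, 1), (4, 2)), ((3, 0), (3, 1)), ((3, 2), (5, 0)), ((5, 1), (5, 2)), ((6, 0), (6, 1))]
    (by decide) (by decide)

/-- There is a bijection `φ` of the vertices such that every vertex `v` of `G₁` has a
2-hop neighborhood isomorphic (via an isomorphism sending `v` to `φ v`) to the 2-hop
neighborhood of `φ v` in `G₂`, even though the minimum vertex cover sizes of `G₁` and
`G₂` are 9 and 10 respectively. -/
theorem G1_G2_locally_isomorphic_but_different_cover_number :
    (∃ φ : (Fin 7 × Fin 3) ≃ (Fin 7 × Fin 3), ∀ v : Fin 7 × Fin 3,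
      ∃ e : G1.induce (ball G1 v 2) ≃g G2.induce (ball G2 (φ v) 2),
        e ⟨v, self_mem_ball G1 v 2⟩ = ⟨φ v, self_mem_ball G2 (φ v) 2⟩) ∧
    ((∃ S : Finset (Fin 7 × Fin 3), IsVertexCover G1 S ∧ S.card = 9) ∧
      (∀ S : Finset (Fin 7 × Fin 3), IsVertexCover G1 S → 9 ≤ S.card)) ∧
    ((∃ S : Finset (Fin 7 × Fin 3), IsVertexCover G2 S ∧ S.card = 10) ∧
      (∀ S : Finset (Fin 7 × Fin 3), IsVertexCover G2 S → 10 ≤ S.card)) := by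
  exact ⟨⟨vertexMap, G1_ball_two_iso_G2⟩,
    ⟨⟨_, isVertexCover_G1, by decide⟩, fun _ => nine_le_card_of_isVertexCover_G1⟩,
    ⟨⟨_, isVertexCover_G2, by decide⟩, fun _ => ten_le_card_of_isVertexCover_G2⟩⟩
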